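/- arXiv:1710.09542 — 3 statements merged into one kernel-verified Lean document; each statement's English description precedes it below -/
import Mathlib

section
/- Let γ, θ be smooth functions of x and let x' = x'(x) be a smooth change of coordinate with x'ₓ > 0 everywhere. Define γ' = (γ·x'ₓ + x'ₓₓ)·(x'ₓ)⁻² and θ' = (θ·(x'ₓ)² + 2γ·x'ₓ·x'ₓₓ + (x'ₓₓ)²)·(x'ₓ)⁻⁴. Then the quantity u = −(1/2)(γₓ + θ/2) transforms as u' = (u − (1/2)·𝔖ₓx')·(x'ₓ)⁻², where 𝔖ₓf = fₓₓₓ/fₓ − (3/2)(fₓₓ/fₓ)² is the Schwarzian derivative, and where u' = −(1/2)(γ'_{x'} + θ'/2), with γ'_{x'} = γ'ₓ/x'ₓ. -/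
private lemma deriv_contDiff_top {f : ℝ → ℝ} (h : ContDiff ℝ (⊤ : ℕ∞) f) : ContDiff ℝ (⊤ : ℕ∞) (deriv f) := by
  have h2 : ContDiff ℝ (((⊤ : ℕ∞) : WithTop ℕ∞) + 1) f := h
  exact (contDiff_succ_iff_deriv.mp h2).2.2


/-- the Schwarzian transformation law for the potential u = −(1/2)(γₓ + θ/2)
follows from the transformation laws for γ and θ. -/
theorem stmt_8 (γ θ x' : ℝ → ℝ)
    (hγ : ContDiff ℝ (⊤ : ℕ∞) γ) (hθ : ContDiff ℝ (⊤ : ℕ∞) θ) (hx' : ContDiff ℝ (⊤ : ℕ∞) x')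
    (hpos : ∀ x, 0 < deriv x' x)
    (γ' θ' u u' : ℝ → ℝ)
    (hγ' : γ' = fun x => (γ x * deriv x' x + deriv (deriv x') x) * (deriv x' x)⁻¹ ^ 2)
    (hθ' : θ' = fun x => (θ x * (deriv x' x) ^ 2 + 2 * γ x * deriv x' x * deriv (deriv x') x
        + (deriv (deriv x') x) ^ 2) * (deriv x' x)⁻¹ ^ 4)
    (hu : u = fun x => -(1/2) * (deriv γ x + θ x / 2))
    (hu' : u' = fun x => -(1/2) * (deriv γ' x / deriv x' x + θ' x / 2)) :
    ∀ x : ℝ, u' x =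
      (u x - (1/2) * (deriv (deriv (deriv x')) x / deriv x' x
          - (3/2) * (deriv (deriv x') x / deriv x' x) ^ 2)) * (deriv x' x)⁻¹ ^ 2 := by
  intro x
  have hf : ContDiff ℝ (⊤ : ℕ∞) (deriv x') := deriv_contDiff_top hx'
  have hg : ContDiff ℝ (⊤ : ℕ∞) (deriv (deriv x')) := deriv_contDiff_top hf
  have hne : deriv x' x ≠ 0 := (hpos x).ne'
  have hγx : HasDerivAt γ (deriv γ x) x := (hγ.differentiable (by simp) x).hasDerivAt
  have hfx : HasDerivAt (deriv x') (deriv (deriv x') x) x :=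
    (hf.differentiable (by simp) x).hasDerivAt
  have hgx : HasDerivAt (deriv (deriv x')) (deriv (deriv (deriv x')) x) x :=
    (hg.differentiable (by simp) x).hasDerivAt
  have h1 : HasDerivAt (fun y => γ y * deriv x' y + deriv (deriv x') y)
      (deriv γ x * deriv x' x + γ x * deriv (deriv x') x + deriv (deriv (deriv x')) x) x :=
    (hγx.mul hfx).add hgx
  have h2 : HasDerivAt (fun y => (deriv x' y)⁻¹ ^ 2)
      (2 * (deriv x' x)⁻¹ ^ 1 * (-(deriv (deriv x') x) / (deriv x' x) ^ 2)) x :=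
    (hfx.inv hne).pow 2
  have h3 := h1.mul h2
  have hd : deriv γ' x
      = (deriv γ x * deriv x' x + γ x * deriv (deriv x') x + deriv (deriv (deriv x')) x)
          * (deriv x' x)⁻¹ ^ 2
        + (γ x * deriv x' x + deriv (deriv x') x)
          * (2 * (deriv x' x)⁻¹ ^ 1 * (-(deriv (deriv x') x) / (deriv x' x) ^ 2)) := by
    rw [hγ']; exact h3.deriv
  rw [hu', hu, hθ']
  simp only [hd]
  field_simp
  ring
end

section
/- Let γ, u : ℝ → ℝ be smooth with γ² + 2(γ' + 2u) > 0 everywhere, and set ψ = (γ² + 2(γ' + 2u))^{−1/4}. Then the system of equations for smooth functions b₀, b₁: (i) b₁² + 2γb₁ − 2(γ' + 2u) = 0, (ii) −b₁' = 2b₀b₁ + 2γb₀ + γ', (iii) −b₀' = b₀² + u, has a solution if and only if ψ satisfies the Sturm–Liouville equation ψ'' + u·ψ = 0. Moreover, in that case a solution is given by b₀ = ψ'/ψ and b₁ = −γ + ψ⁻². -/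
/-- factorization criterion for the generalized Sturm–Liouville operator:
the system for (b₀, b₁) is solvable iff ψ = (γ² + 2(γ' + 2u))^(−1/4) satisfies the
classical Sturm–Liouville equation; in that case b₀ = ψ'/ψ, b₁ = −γ + ψ⁻² is a solution. -/
theorem stmt_10 (γ u : ℝ → ℝ) (hγ : ContDiff ℝ (⊤ : ℕ∞) γ) (hu : ContDiff ℝ (⊤ : ℕ∞) u)
    (hpos : ∀ x, 0 < γ x ^ 2 + 2 * (deriv γ x + 2 * u x))
    (ψ : ℝ → ℝ)
    (hψ : ψ = fun x => (γ x ^ 2 + 2 * (deriv γ x + 2 * u x)) ^ (-(1/4) : ℝ)) :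
    ((∃ b₀ b₁ : ℝ → ℝ, ContDiff ℝ (⊤ : ℕ∞) b₀ ∧ ContDiff ℝ (⊤ : ℕ∞) b₁ ∧
        (∀ x, b₁ x ^ 2 + 2 * γ x * b₁ x - 2 * (deriv γ x + 2 * u x) = 0) ∧
        (∀ x, -deriv b₁ x = 2 * b₀ x * b₁ x + 2 * γ x * b₀ x + deriv γ x) ∧
        (∀ x, -deriv b₀ x = b₀ x ^ 2 + u x))
      ↔ (∀ x, deriv (deriv ψ) x + u x * ψ x = 0)) ∧
    ((∀ x, deriv (deriv ψ) x + u x * ψ x = 0) →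
      ((∀ x, (-γ x + (ψ x)⁻¹ ^ 2) ^ 2 + 2 * γ x * (-γ x + (ψ x)⁻¹ ^ 2)
            - 2 * (deriv γ x + 2 * u x) = 0) ∧
       (∀ x, -deriv (fun y => -γ y + (ψ y)⁻¹ ^ 2) x
            = 2 * (deriv ψ x / ψ x) * (-γ x + (ψ x)⁻¹ ^ 2)
              + 2 * γ x * (deriv ψ x / ψ x) + deriv γ x) ∧
       (∀ x, -deriv (fun y => deriv ψ y / ψ y) x = (deriv ψ x / ψ x) ^ 2 + u x))) := by
  -- derivative-smoothness helper
  have hd : ∀ f : ℝ → ℝ, ContDiff ℝ (⊤ : ℕ∞) f → ContDiff ℝ (⊤ : ℕ∞) (deriv f) := fun f hf => by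
    rw [show (((⊤ : ℕ∞) : WithTop ℕ∞)) = ((⊤ : ℕ∞) : WithTop ℕ∞) + 1 from rfl] at hf
    exact (contDiff_succ_iff_deriv.mp hf).2.2
  set Q : ℝ → ℝ := fun x => γ x ^ 2 + 2 * (deriv γ x + 2 * u x) with hQdef
  have hQc : ContDiff ℝ (⊤ : ℕ∞) Q :=
    (hγ.pow 2).add (contDiff_const.mul ((hd γ hγ).add (contDiff_const.mul hu)))
  have hQpos : ∀ x, 0 < Q x := hpos
  have hQne : ∀ x, Q x ≠ 0 := fun x => (hQpos x).ne'
  have hψc : ContDiff ℝ (⊤ : ℕ∞) ψ := by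
    rw [hψ]
    exact contDiff_iff_contDiffAt.mpr fun x => hQc.contDiffAt.rpow_const_of_ne (hQne x)
  have hψpos : ∀ x, 0 < ψ x := fun x => by
    rw [hψ]; exact Real.rpow_pos_of_pos (hQpos x) _
  have hψne : ∀ x, ψ x ≠ 0 := fun x => (hψpos x).ne'
  have hψ4 : ∀ x, ψ x ^ 4 * Q x = 1 := fun x => by
    rw [hψ]
    simp only
    rw [← Real.rpow_natCast ((Q x) ^ (-(1/4):ℝ)) 4, ← Real.rpow_mul (hQpos x).le]
    norm_num [Real.rpow_neg_one, inv_mul_cancel₀ (hQne x)]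
  -- HasDerivAt facts
  have hQd : ∀ x, HasDerivAt Q (deriv Q x) x :=
    fun x => (hQc.differentiable (by simp) x).hasDerivAt
  have hψd : ∀ x, HasDerivAt ψ (deriv ψ x) x :=
    fun x => (hψc.differentiable (by simp) x).hasDerivAt
  have hψ'c : ContDiff ℝ (⊤ : ℕ∞) (deriv ψ) := hd ψ hψc
  have hψ'd : ∀ x, HasDerivAt (deriv ψ) (deriv (deriv ψ) x) x :=
    fun x => (hψ'c.differentiable (by simp) x).hasDerivAt
  have hγd : ∀ x, HasDerivAt γ (deriv γ x) x :=
    fun x => (hγ.differentiable (by simp) x).hasDerivAt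
  -- key relation: 4 ψ' Q + ψ Q' = 0
  have hrel : ∀ x, 4 * deriv ψ x * Q x + ψ x * deriv Q x = 0 := by
    intro x
    have h1 : HasDerivAt (fun y => ψ y ^ 4 * Q y)
        (4 * ψ x ^ 3 * deriv ψ x * Q x + ψ x ^ 4 * deriv Q x) x := by
      have := ((hψd x).pow 4).mul (hQd x)
      refine this.congr_deriv ?_; simp only [Pi.pow_apply, Pi.add_apply, Pi.inv_apply, Pi.neg_apply]; push_cast; ring
    rw [funext hψ4] at h1
    have h0 := h1.unique (hasDerivAt_const x 1)
    have h2 : ψ x ^ 3 * (4 * deriv ψ x * Q x + ψ x * deriv Q x) = 0 := by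
      linear_combination h0
    exact (mul_eq_zero.mp h2).resolve_left (pow_ne_zero 3 (hψne x))
  -- ψ⁻⁴ = Q
  have hinv4 : ∀ x, ((ψ x)⁻¹ ^ 2) ^ 2 = Q x := fun x => by
    have h2 : Q x = (ψ x ^ 4)⁻¹ := eq_inv_of_mul_eq_one_left (by linear_combination hψ4 x)
    rw [h2]
    ring
  -- the three equations for the explicit candidate; (i) and (ii) are unconditional
  have S1 : ∀ x, (-γ x + (ψ x)⁻¹ ^ 2) ^ 2 + 2 * γ x * (-γ x + (ψ x)⁻¹ ^ 2)
      - 2 * (deriv γ x + 2 * u x) = 0 := fun x => by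
    have h := hinv4 x
    simp only [hQdef] at h
    linear_combination h
  have S2 : ∀ x, -deriv (fun y => -γ y + (ψ y)⁻¹ ^ 2) x
      = 2 * (deriv ψ x / ψ x) * (-γ x + (ψ x)⁻¹ ^ 2)
        + 2 * γ x * (deriv ψ x / ψ x) + deriv γ x := by
    intro x
    have h : HasDerivAt (fun y => -γ y + (ψ y)⁻¹ ^ 2)
        (-(deriv γ x) + 2 * (ψ x)⁻¹ ^ 1 * (-(deriv ψ x) / ψ x ^ 2)) x := by
      have := ((hγd x).neg).add (((hψd x).inv (hψne x)).pow 2)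
      refine this.congr_deriv ?_; simp only [Pi.pow_apply, Pi.add_apply, Pi.inv_apply, Pi.neg_apply]; push_cast; ring
    rw [h.deriv]
    field_simp
    ring
  have S3 : (∀ x, deriv (deriv ψ) x + u x * ψ x = 0) →
      ∀ x, -deriv (fun y => deriv ψ y / ψ y) x = (deriv ψ x / ψ x) ^ 2 + u x := by
    intro hSL x
    have h : HasDerivAt (fun y => deriv ψ y / ψ y)
        ((deriv (deriv ψ) x * ψ x - deriv ψ x * deriv ψ x) / ψ x ^ 2) x :=
      (hψ'd x).div (hψd x) (hψne x)
    have hs : deriv (deriv ψ) x = -(u x * ψ x) := by linarith [hSL x]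
    rw [h.deriv, hs]
    have hone : ψ x ^ 2 * (ψ x)⁻¹ ^ 2 = 1 := by
      rw [← mul_pow, mul_inv_cancel₀ (hψne x), one_pow]
    field_simp
    linear_combination u x * hone
  constructor
  · constructor
    · -- forward: any solution forces the SL equation
      rintro ⟨b₀, b₁, hb₀c, hb₁c, e1, e2, e3⟩
      have hb₀d : ∀ x, HasDerivAt b₀ (deriv b₀ x) x :=
        fun x => (hb₀c.differentiable (by simp) x).hasDerivAt
      have hb₁d : ∀ x, HasDerivAt b₁ (deriv b₁ x) x :=
        fun x => (hb₁c.differentiable (by simp) x).hasDerivAt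
      have hsq : ∀ x, (b₁ x + γ x) ^ 2 = Q x := fun x => by
        simp only [hQdef]; linear_combination e1 x
      have hD : ∀ x, 2 * (b₁ x + γ x) * (deriv b₁ x + deriv γ x) = deriv Q x := by
        intro x
        have hF : HasDerivAt (fun y => (b₁ y + γ y) ^ 2)
            (2 * (b₁ x + γ x) * (deriv b₁ x + deriv γ x)) x := by
          have := ((hb₁d x).add (hγd x)).pow 2
          refine this.congr_deriv ?_; simp only [Pi.pow_apply, Pi.add_apply, Pi.inv_apply, Pi.neg_apply]; push_cast; ring
        rw [funext hsq] at hF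
        exact hF.unique (hQd x)
      have hb0Q : ∀ x, deriv Q x = -4 * b₀ x * Q x := by
        intro x
        linear_combination -hD x - 2 * (b₁ x + γ x) * e2 x - 4 * b₀ x * hsq x
      have hψ'b : ∀ x, deriv ψ x = b₀ x * ψ x := by
        intro x
        have h : 4 * Q x * (deriv ψ x - b₀ x * ψ x) = 0 := by
          linear_combination hrel x - ψ x * hb0Q x
        have := (mul_eq_zero.mp h).resolve_left
          (by have := hQpos x; positivity)
        linarith
      intro x
      have h2d : deriv (deriv ψ) x = deriv b₀ x * ψ x + b₀ x * deriv ψ x := by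
        conv_lhs => rw [show deriv ψ = fun y => b₀ y * ψ y from funext hψ'b]
        exact ((hb₀d x).mul (hψd x)).deriv
      linear_combination h2d - ψ x * e3 x + b₀ x * hψ'b x
    · -- backward: explicit solution
      intro hSL
      exact ⟨fun x => deriv ψ x / ψ x, fun x => -γ x + (ψ x)⁻¹ ^ 2,
        hψ'c.div hψc hψne, (hγ.neg).add ((hψc.inv hψne).pow 2),
        S1, S2, S3 hSL⟩
  · intro hSL
    exact ⟨S1, S2, S3 hSL⟩
end

section
/- Let γ, u : ℝ → ℝ be smooth with γ² + 2(γ' + 2u) > 0 everywhere, and set ψ = (γ² + 2(γ' + 2u))^{−1/4}. Define b₀ = ψ'/ψ, b₁ = −γ + ψ⁻², f = (ψ'' + uψ)/ψ. Then (b₀, b₁, f) satisfies the system: −b₀' = b₀² + u − f, −b₁' = 2b₀b₁ + 2γb₀ + γ', and 0 = b₁² + 2γb₁ − 2(γ' + 2u). Moreover, among solutions with b₁ + γ = ψ⁻², this solution is unique. -/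
open scoped ContDiff

private lemma aux_rpow (t : ℝ) (ht : 0 < t) :
    ((t ^ (-(1/4) : ℝ))⁻¹ ^ 2) ^ 2 = t := by
  have h1 : (t ^ (-(1/4) : ℝ))⁻¹ = t ^ ((1/4 : ℝ)) := by
    rw [← Real.rpow_neg ht.le, neg_neg]
  rw [h1, ← pow_mul, ← Real.rpow_natCast (t ^ ((1/4 : ℝ))) (2*2),
    ← Real.rpow_mul ht.le]
  norm_num

/-- incomplete factorization of the generalized Sturm–Liouville operator:
existence and uniqueness (within the branch b₁ + γ = ψ⁻²). -/
theorem stmt_12 (γ u : ℝ → ℝ) (hγ : ContDiff ℝ (⊤ : ℕ∞) γ) (hu : ContDiff ℝ (⊤ : ℕ∞) u)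
    (hpos : ∀ x, 0 < γ x ^ 2 + 2 * (deriv γ x + 2 * u x))
    (ψ : ℝ → ℝ)
    (hψ : ψ = fun x => (γ x ^ 2 + 2 * (deriv γ x + 2 * u x)) ^ (-(1/4) : ℝ))
    (b₀ b₁ f : ℝ → ℝ)
    (hb₀ : b₀ = fun x => deriv ψ x / ψ x)
    (hb₁ : b₁ = fun x => -γ x + (ψ x)⁻¹ ^ 2)
    (hf : f = fun x => (deriv (deriv ψ) x + u x * ψ x) / ψ x) :
    ((∀ x, -deriv b₀ x = b₀ x ^ 2 + u x - f x) ∧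
     (∀ x, -deriv b₁ x = 2 * b₀ x * b₁ x + 2 * γ x * b₀ x + deriv γ x) ∧
     (∀ x, 0 = b₁ x ^ 2 + 2 * γ x * b₁ x - 2 * (deriv γ x + 2 * u x))) ∧
    (∀ c₀ c₁ g : ℝ → ℝ, ContDiff ℝ (⊤ : ℕ∞) c₀ → ContDiff ℝ (⊤ : ℕ∞) c₁ → ContDiff ℝ (⊤ : ℕ∞) g →
      (∀ x, -deriv c₀ x = c₀ x ^ 2 + u x - g x) →
      (∀ x, -deriv c₁ x = 2 * c₀ x * c₁ x + 2 * γ x * c₀ x + deriv γ x) →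
      (∀ x, 0 = c₁ x ^ 2 + 2 * γ x * c₁ x - 2 * (deriv γ x + 2 * u x)) →
      (∀ x, c₁ x + γ x = (ψ x)⁻¹ ^ 2) →
      c₀ = b₀ ∧ c₁ = b₁ ∧ g = f) := by
  -- smoothness of ψ
  have hgS : ContDiff ℝ ∞ γ := hγ.of_le (by simp)
  have huS : ContDiff ℝ ∞ u := hu.of_le (by simp)
  have hγ' : ContDiff ℝ ∞ (deriv γ) := (contDiff_infty_iff_deriv.mp hgS).2
  have hθ : ContDiff ℝ ∞ (fun x => γ x ^ 2 + 2 * (deriv γ x + 2 * u x)) :=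
    (hgS.pow 2).add (contDiff_const.mul (hγ'.add (contDiff_const.mul huS)))
  have hψpos : ∀ x, 0 < ψ x := by
    intro x; rw [hψ]; exact Real.rpow_pos_of_pos (hpos x) _
  have hne : ∀ x, ψ x ≠ 0 := fun x => (hψpos x).ne'
  have hψC : ContDiff ℝ ∞ ψ := by
    rw [hψ, contDiff_iff_contDiffAt]
    intro x
    exact hθ.contDiffAt.rpow_const_of_ne (hpos x).ne'
  have hψ1 : Differentiable ℝ ψ := hψC.differentiable (by norm_num)
  have hψ'1 : Differentiable ℝ (deriv ψ) :=
    ((contDiff_infty_iff_deriv.mp hψC).2).differentiable (by norm_num)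
  have hγ1 : Differentiable ℝ γ := hgS.differentiable (by norm_num)
  -- key algebraic identity
  have hkey : ∀ x, ((ψ x)⁻¹ ^ 2) ^ 2 = γ x ^ 2 + 2 * (deriv γ x + 2 * u x) := by
    intro x; rw [hψ]; exact aux_rpow _ (hpos x)
  -- existence equations
  have E1 : ∀ x, -deriv b₀ x = b₀ x ^ 2 + u x - f x := by
    intro x
    have hd : deriv b₀ x =
        (deriv (deriv ψ) x * ψ x - deriv ψ x * deriv ψ x) / ψ x ^ 2 := by
      rw [hb₀]; exact deriv_div (hψ'1 x) (hψ1 x) (hne x)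
    rw [hd, hb₀, hf]
    have := hne x
    field_simp
    ring
  have E2 : ∀ x, -deriv b₁ x = 2 * b₀ x * b₁ x + 2 * γ x * b₀ x + deriv γ x := by
    intro x
    have h1 : HasDerivAt ψ (deriv ψ x) x := (hψ1 x).hasDerivAt
    have h2 := ((h1.inv (hne x)).pow 2)
    have h3 : HasDerivAt γ (deriv γ x) x := (hγ1 x).hasDerivAt
    have h4 := h3.neg.add h2
    have hd : deriv b₁ x = -deriv γ x + 2 * (ψ x)⁻¹ ^ (2 - 1) * (-deriv ψ x / ψ x ^ 2) := by
      rw [hb₁]; exact h4.deriv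
    rw [hd, hb₀, hb₁]
    have := hne x
    field_simp
    ring_nf
    rw [mul_inv_cancel₀ this]
    ring
  have E3 : ∀ x, 0 = b₁ x ^ 2 + 2 * γ x * b₁ x - 2 * (deriv γ x + 2 * u x) := by
    intro x
    have hk := hkey x
    rw [hb₁]
    linear_combination -hk
  refine ⟨⟨E1, E2, E3⟩, ?_⟩
  intro c₀ c₁ g hc₀ hc₁ hg e1 e2 e3 hbr
  have hc1b : c₁ = b₁ := by
    funext x
    have := hbr x
    rw [hb₁]; linarith
  have hc0b : c₀ = b₀ := by
    funext x
    have hbx : b₁ x + γ x = (ψ x)⁻¹ ^ 2 := by rw [hb₁]; ring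
    have h1 := e2 x
    rw [hc1b] at h1
    have h2 := E2 x
    have hs : ((ψ x)⁻¹ ^ 2) ≠ 0 := pow_ne_zero _ (inv_ne_zero (hne x))
    have h4 : (c₀ x - b₀ x) * ((ψ x)⁻¹ ^ 2) = 0 := by
      rw [← hbx]; linear_combination (h2 - h1) / 2
    rcases mul_eq_zero.mp h4 with h | h
    · linarith
    · exact absurd h hs
  refine ⟨hc0b, hc1b, ?_⟩
  funext x
  have h1 := e1 x
  have h2 := E1 x
  rw [hc0b] at h1
  linarith
end
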